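/- Let g≥1 and let τ be a symmetric g×g complex matrix whose imaginary part is positive definite. Let e, e' ∈ ℤ^g be integer vectors with e·e' odd, and set c := (1/2)e + (1/2)τ(e') ∈ ℂ^g (an odd half-integer characteristic). Then θ(c | τ) = 0, where θ := ϑ_{0,0}. -/

import Mathlib

open scoped Matrix

/-- The theta function with characteristics `μ, ν` associated to a `g × g` matrix `τ`:
`ϑ_{μ,ν}(z|τ) = Σ_{n ∈ ℤ^g} exp(iπ (n+μ)·τ(n+μ) + 2iπ (n+μ)·(z+ν))`. -/
noncomputable def thetaChar (g : ℕ) (μ ν : Fin g → ℝ) (τ : Matrix (Fin g) (Fin g) ℂ)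
    (z : Fin g → ℂ) : ℂ :=
  ∑' n : Fin g → ℤ,
    Complex.exp ((Real.pi : ℂ) * Complex.I *
        (∑ i, ((n i : ℂ) + (μ i : ℂ)) * (τ.mulVec (fun j => (n j : ℂ) + (μ j : ℂ))) i)
      + 2 * (Real.pi : ℂ) * Complex.I * ∑ i, ((n i : ℂ) + (μ i : ℂ)) * (z i + (ν i : ℂ)))


/-!
Pair the lattice point `n` with `-n - e'`. For symmetric `τ` the summand at `-n - e'` is the
summand at `n` times `exp(-2πi n·e) exp(-πi e·e') = -1` when `e·e'` is odd, so the terms cancel in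
pairs and the sum equals its own negative. No convergence is needed: reindexing a `tsum` along a
bijection is valid unconditionally.
-/

open Complex Matrix Real

theorem Equiv.tsum_eq_zero_of_apply_eq_neg {α β : Type*} [AddCommGroup α] [TopologicalSpace α]
    [IsTopologicalAddGroup α] [T2Space α] [IsAddTorsionFree α] (σ : β ≃ β) {f : β → α}
    (hf : ∀ b, f (σ b) = -f b) : ∑' b, f b = 0 := by
  have h := σ.tsum_eq f
  rw [tsum_congr hf, tsum_neg] at h
  exact neg_eq_self.mp h

section ThetaTerm

variable {ι : Type*} [Fintype ι]

noncomputable def thetaTerm (τ : Matrix ι ι ℂ) (z x : ι → ℂ) : ℂ :=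
  cexp (π * I * (x ⬝ᵥ τ *ᵥ x) + 2 * π * I * (x ⬝ᵥ z))

theorem thetaChar_zero_zero_eq_tsum_thetaTerm (g : ℕ) (τ : Matrix (Fin g) (Fin g) ℂ)
    (z : Fin g → ℂ) :
    thetaChar g 0 0 τ z = ∑' n : Fin g → ℤ, thetaTerm τ z (fun i => (n i : ℂ)) := by
  simp only [thetaChar, thetaTerm, dotProduct, Pi.zero_apply, ofReal_zero, add_zero]

theorem thetaTerm_neg_sub {τ : Matrix ι ι ℂ} (hτ : τ.IsSymm) (x a b : ι → ℂ) :
    thetaTerm τ ((2 : ℂ)⁻¹ • (b + τ *ᵥ a)) (-x - a) =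
      thetaTerm τ ((2 : ℂ)⁻¹ • (b + τ *ᵥ a)) x * cexp (-(x ⬝ᵥ b) * (2 * π * I))
        * cexp (-(a ⬝ᵥ b) * (π * I)) := by
  have hsymm : a ⬝ᵥ τ *ᵥ x = x ⬝ᵥ τ *ᵥ a := by
    rw [dotProduct_mulVec, ← mulVec_transpose, hτ.eq, dotProduct_comm]
  simp only [thetaTerm, ← Complex.exp_add]
  congr 1
  simp only [mulVec_sub, mulVec_neg, sub_dotProduct, neg_dotProduct, dotProduct_sub,
    dotProduct_neg, dotProduct_smul, dotProduct_add, smul_eq_mul, hsymm]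
  ring

theorem thetaTerm_neg_sub_of_odd {τ : Matrix ι ι ℂ} (hτ : τ.IsSymm) (n e e' : ι → ℤ)
    (hodd : Odd (∑ i, e i * e' i)) :
    thetaTerm τ ((2 : ℂ)⁻¹ • ((fun i => (e i : ℂ)) + τ *ᵥ fun i => (e' i : ℂ)))
        (fun i => ((-n - e') i : ℂ)) =
      -thetaTerm τ ((2 : ℂ)⁻¹ • ((fun i => (e i : ℂ)) + τ *ᵥ fun i => (e' i : ℂ)))
        (fun i => (n i : ℂ)) := by
  obtain ⟨m, hm⟩ := hodd
  have hcast : (fun i => ((-n - e') i : ℂ)) = -(fun i => (n i : ℂ)) - fun i => (e' i : ℂ) := by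
    ext i; push_cast [Pi.sub_apply, Pi.neg_apply]; rfl
  have hne : (fun i => (n i : ℂ)) ⬝ᵥ (fun i => (e i : ℂ)) = ((∑ i, n i * e i : ℤ) : ℂ) := by
    push_cast [dotProduct]; rfl
  have hee : (fun i => (e' i : ℂ)) ⬝ᵥ (fun i => (e i : ℂ)) = ((2 * m + 1 : ℤ) : ℂ) := by
    rw [← hm]; push_cast [dotProduct, mul_comm]; rfl
  rw [hcast, thetaTerm_neg_sub hτ, hne, hee, ← Int.cast_neg, exp_int_mul_two_pi_mul_I]
  have hodd_exp : cexp (-((2 * m + 1 : ℤ) : ℂ) * (π * I)) = -1 := by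
    rw [show -((2 * m + 1 : ℤ) : ℂ) * (π * I) = ((-m - 1 : ℤ) : ℂ) * (2 * π * I) + π * I by
        push_cast; ring,
      Complex.exp_add, exp_int_mul_two_pi_mul_I, exp_pi_mul_I, one_mul]
  rw [hodd_exp]
  ring

end ThetaTerm

theorem theta_vanishes_at_odd_half_integer_characteristic_general (g : ℕ)
    (τ : Matrix (Fin g) (Fin g) ℂ) (hτ : τ.IsSymm)
    (e e' : Fin g → ℤ) (hodd : Odd (∑ i, e i * e' i)) :
    thetaChar g 0 0 τ
      (fun i => (e i : ℂ) / 2 + (1 / 2 : ℂ) * (τ.mulVec (fun j => (e' j : ℂ))) i) = 0 := by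
  have hc : (fun i => (e i : ℂ) / 2 + (1 / 2 : ℂ) * (τ *ᵥ fun j => (e' j : ℂ)) i) =
      (2 : ℂ)⁻¹ • ((fun i => (e i : ℂ)) + τ *ᵥ fun j => (e' j : ℂ)) := by
    ext i; simp only [Pi.smul_apply, Pi.add_apply, smul_eq_mul]; ring
  rw [hc, thetaChar_zero_zero_eq_tsum_thetaTerm]
  exact ((Equiv.neg _).trans (Equiv.subRight e')).tsum_eq_zero_of_apply_eq_neg
    fun n => thetaTerm_neg_sub_of_odd hτ n e e' hodd

/-- The Riemann theta function `θ = ϑ_{0,0}` vanishes at any odd half-integer characteristic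
`c = (1/2)e + (1/2)τ(e')` with `e, e' ∈ ℤ^g` and `e·e'` odd. -/
theorem theta_vanishes_at_odd_half_integer_characteristic (g : ℕ) (hg : 1 ≤ g)
    (τ : Matrix (Fin g) (Fin g) ℂ) (hτ : τ.IsSymm)
    (hτim : (τ.map Complex.im).PosDef)
    (e e' : Fin g → ℤ) (hodd : Odd (∑ i, e i * e' i)) :
    thetaChar g 0 0 τ
      (fun i => (e i : ℂ) / 2 + (1 / 2 : ℂ) * (τ.mulVec (fun j => (e' j : ℂ))) i) = 0 :=
  theta_vanishes_at_odd_half_integer_characteristic_general g τ hτ e e' hodd
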